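/- arXiv:1611.07682 — 3 statements merged into one kernel-verified Lean document; each statement's English description precedes it below -/
import Mathlib

section
/- Let I = (G,s,t,c,Q) be a QSPP instance such that every s-t path in G has the same length L, and suppose Q is a symmetric weak sum matrix, i.e., there is a vector a indexed by arcs with q_{e,f} = a_e + a_f for all pairs of distinct arcs e ≠ f. Then I is linearizable; in particular, the nonnegative vector c' defined by c'_e = 2(L−1)a_e + c_e satisfies C(P,c,Q) = C(P,c') for every s-t path P. -/
/-!
On a path with `m` arcs, the weak-sum form of `Q` gives `∑_{e ≠ f} (a_e + a_f) = 2 (m - 1) ∑_e a_e`,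
so when every path has `L` arcs, `C(P,c,Q) = C(P,w)` with `w = 2 (L - 1) a + c`.

The vector `w` may have negative entries, but for distinct arcs `e ≠ f` of `s`-`t` paths
`w_e + w_f = 2 (L - 1) q_{ef} + c_e + c_f ≥ 0`, so at most one such arc `e₀` has `w_{e₀} < 0`,
and `e₀ ≠ (s,t)` (otherwise the only path is `[s,t]`, `L = 1` and `w = c`). A vertex potential
`φ` with `φ s = φ t` does not change the `w`-cost of any `s`-`t` path; putting `φ` on one endpoint
of `e₀` other than `s`, `t` makes the reduced cost of `e₀` zero and lowers every other arc by at
most `|w_{e₀}|`, which keeps it nonnegative. Truncating at `0` off the paths gives `c' ≥ 0`.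
-/

/-- An `s`-`t` path in the digraph on vertex type `V` with arc relation `A`,
represented as the list of its (distinct) vertices. -/
def IsPath {V : Type*} (A : V → V → Prop) (s t : V) (P : List V) : Prop :=
  2 ≤ P.length ∧ P.head? = some s ∧ P.getLast? = some t ∧ P.Nodup ∧ P.Chain' A

/-- The arcs traversed by a path, as the list of ordered pairs of consecutive vertices. -/
def arcsOf {V : Type*} (P : List V) : List (V × V) :=
  P.zip P.tail

/-- Linear cost `C(P,c)` of a path. -/
noncomputable def linCost {V : Type*} (c : V × V → ℝ) (P : List V) : ℝ :=
  ((arcsOf P).map c).sum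

/-- Total (quadratic) cost `C(P,c,Q)` of a path: the sum of the interaction costs over all
ordered pairs of arcs of `P` plus the sum of the linear costs of the arcs of `P`. -/
noncomputable def cost {V : Type*} (c : V × V → ℝ) (Q : V × V → V × V → ℝ)
    (P : List V) : ℝ :=
  ((arcsOf P).map fun e => ((arcsOf P).map fun f => Q e f).sum).sum + linCost c P

/-- A QSPP instance `(G,s,t,c,Q)` is linearizable if there is a nonnegative cost vector `c'`
such that `C(P,c,Q) = C(P,c')` for every `s`-`t` path `P`. -/
def Linearizable {V : Type*} (A : V → V → Prop) (s t : V) (c : V × V → ℝ)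
    (Q : V × V → V × V → ℝ) : Prop :=
  ∃ c' : V × V → ℝ, (∀ e, 0 ≤ c' e) ∧
    ∀ P, IsPath A s t P → cost c Q P = linCost c' P

section arcsOf

variable {V : Type*}

@[simp] lemma arcsOf_nil : arcsOf ([] : List V) = [] := rfl

@[simp] lemma arcsOf_singleton (x : V) : arcsOf [x] = [] := rfl

@[simp] lemma arcsOf_cons_cons (x y : V) (l : List V) :
    arcsOf (x :: y :: l) = (x, y) :: arcsOf (y :: l) := rfl

lemma length_arcsOf (P : List V) : (arcsOf P).length = P.length - 1 := by
  simp only [arcsOf, List.length_zip, List.length_tail]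
  omega

lemma fst_mem_of_mem_arcsOf {P : List V} {e : V × V} (he : e ∈ arcsOf P) : e.1 ∈ P :=
  (List.of_mem_zip he).1

lemma snd_mem_tail_of_mem_arcsOf {P : List V} {e : V × V} (he : e ∈ arcsOf P) :
    e.2 ∈ P.tail :=
  (List.of_mem_zip he).2

lemma fst_mem_dropLast_of_mem_arcsOf {e : V × V} :
    ∀ {P : List V}, e ∈ arcsOf P → e.1 ∈ P.dropLast
  | [], he | [_], he => by simp at he
  | x :: y :: l, he => by
    rw [List.dropLast_cons_cons]
    rcases List.mem_cons.1 he with rfl | he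
    · exact List.mem_cons_self
    · exact List.mem_cons_of_mem _ (fst_mem_dropLast_of_mem_arcsOf he)

lemma rel_of_mem_arcsOf {A : V → V → Prop} {e : V × V} :
    ∀ {P : List V}, P.IsChain A → e ∈ arcsOf P → A e.1 e.2
  | [], _, he | [_], _, he => by simp at he
  | x :: y :: l, hP, he => by
    rw [List.isChain_cons_cons] at hP
    rcases List.mem_cons.1 he with rfl | he
    · exact hP.1
    · exact rel_of_mem_arcsOf hP.2 he

lemma nodup_arcsOf : ∀ {P : List V}, P.Nodup → (arcsOf P).Nodup
  | [], _ | [_], _ => by simp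
  | x :: y :: l, hP => by
    rw [List.nodup_cons] at hP
    rw [arcsOf_cons_cons, List.nodup_cons]
    exact ⟨fun h => hP.1 (fst_mem_of_mem_arcsOf h), nodup_arcsOf hP.2⟩

lemma fst_ne_snd_of_mem_arcsOf {e : V × V} :
    ∀ {P : List V}, P.Nodup → e ∈ arcsOf P → e.1 ≠ e.2
  | [], _, he | [_], _, he => by simp at he
  | x :: y :: l, hP, he => by
    rw [List.nodup_cons] at hP
    rcases List.mem_cons.1 he with rfl | he
    · exact fun hxy => hP.1 (List.mem_cons.2 (.inl hxy))
    · exact fst_ne_snd_of_mem_arcsOf hP.2 he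

lemma sum_arcsOf_sub (φ : V → ℝ) {x y : V} :
    ∀ {P : List V}, P.head? = some x → P.getLast? = some y →
      ((arcsOf P).map fun e => φ e.1 - φ e.2).sum = φ x - φ y
  | [], hx, _ => by simp at hx
  | [_], hx, hy => by simp_all
  | z :: w :: l, hx, hy => by
    obtain rfl : z = x := by simpa using hx
    rw [List.getLast?_cons_cons] at hy
    rw [arcsOf_cons_cons, List.map_cons, List.sum_cons, sum_arcsOf_sub φ rfl hy]
    ring

end arcsOf

namespace IsPath

variable {V : Type*} {A : V → V → Prop} {s t : V} {P : List V}

lemma snd_ne_source (hP : IsPath A s t P) {e : V × V} (he : e ∈ arcsOf P) : e.2 ≠ s := by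
  obtain ⟨-, hs, -, hnd, -⟩ := hP
  obtain ⟨l, rfl⟩ := List.head?_eq_some_iff.1 hs
  rintro h
  exact (List.nodup_cons.1 hnd).1 (h ▸ snd_mem_tail_of_mem_arcsOf he)

lemma fst_ne_target (hP : IsPath A s t P) {e : V × V} (he : e ∈ arcsOf P) : e.1 ≠ t := by
  obtain ⟨-, -, ht, hnd, -⟩ := hP
  have hmem := fst_mem_dropLast_of_mem_arcsOf he
  obtain ⟨l, rfl⟩ := List.getLast?_eq_some_iff.1 ht
  rw [List.nodup_append] at hnd
  rw [List.dropLast_concat] at hmem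
  exact hnd.2.2 _ hmem _ (List.mem_singleton_self t)

lemma eq_pair_of_mem_arcsOf (hP : IsPath A s t P) (hst : (s, t) ∈ arcsOf P) : P = [s, t] := by
  match P, hP, hst with
  | [], _, h | [_], _, h => simp at h
  | x :: y :: l, hP, h =>
    obtain rfl : x = s := by simpa using hP.2.1
    rcases List.mem_cons.1 h with h | h
    · obtain rfl : y = t := (Prod.ext_iff.1 h).2.symm
      cases l with
      | nil => rfl
      | cons z l => exact absurd rfl (hP.fst_ne_target (e := (y, z)) (by simp))
    · exact absurd (fst_mem_of_mem_arcsOf h) (List.nodup_cons.1 hP.2.2.2.1).1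

lemma linCost_add_potential (hP : IsPath A s t P) (w : V × V → ℝ) {φ : V → ℝ}
    (hφ : φ s = φ t) : linCost (fun e => w e + (φ e.1 - φ e.2)) P = linCost w P := by
  rw [linCost, List.sum_map_add, sum_arcsOf_sub φ hP.2.1 hP.2.2.1, hφ, sub_self, add_zero,
    linCost]

end IsPath

theorem Finset.sum_sum_of_eq_add_of_ne {ι : Type*} [DecidableEq ι] (S : Finset ι)
    (q : ι → ι → ℝ) (a : ι → ℝ) (hdiag : ∀ e ∈ S, q e e = 0)
    (hoff : ∀ e ∈ S, ∀ f ∈ S, e ≠ f → q e f = a e + a f) :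
    ∑ e ∈ S, ∑ f ∈ S, q e f = 2 * ((S.card : ℝ) - 1) * ∑ e ∈ S, a e := by
  have row : ∀ e ∈ S, ∑ f ∈ S, q e f = S.card * a e + ∑ f ∈ S, a f - 2 * a e := by
    intro e he
    have hrow : ∑ f ∈ S.erase e, q e f = ∑ f ∈ S.erase e, (a e + a f) :=
      Finset.sum_congr rfl fun f hf =>
        hoff e he f (Finset.mem_of_mem_erase hf) (Finset.ne_of_mem_erase hf).symm
    rw [← Finset.add_sum_erase S _ he, hdiag e he, zero_add, hrow,
      ← add_sub_cancel_left (a e + a e) (∑ f ∈ S.erase e, (a e + a f)),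
      Finset.add_sum_erase S (fun f => a e + a f) he, Finset.sum_add_distrib,
      Finset.sum_const, nsmul_eq_mul]
    ring
  rw [Finset.sum_congr rfl row, Finset.sum_sub_distrib, Finset.sum_add_distrib,
    ← Finset.mul_sum, Finset.sum_const, nsmul_eq_mul, ← Finset.mul_sum]
  ring

lemma cost_eq_linCost_of_weakSum {V : Type*} {A : V → V → Prop} {c a : V × V → ℝ}
    {Q : V × V → V × V → ℝ} (hdiag : ∀ e, Q e e = 0)
    (hoff : ∀ e f : V × V, A e.1 e.2 → A f.1 f.2 → e ≠ f → Q e f = a e + a f)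
    {P : List V} (hnd : P.Nodup) (hchain : P.IsChain A) :
    cost c Q P = linCost (fun e => 2 * (((arcsOf P).length : ℝ) - 1) * a e + c e) P := by
  classical
  have hnd' := nodup_arcsOf hnd
  have hsum := (arcsOf P).toFinset.sum_sum_of_eq_add_of_ne Q a (fun e _ => hdiag e)
    fun e he f hf hef => hoff e f (rel_of_mem_arcsOf hchain (List.mem_toFinset.1 he))
      (rel_of_mem_arcsOf hchain (List.mem_toFinset.1 hf)) hef
  simp only [List.sum_toFinset _ hnd', List.toFinset_card_of_nodup hnd'] at hsum
  rw [cost, hsum, linCost, linCost, List.sum_map_add, List.sum_map_mul_left]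

section Linearization

variable {V : Type*} {A : V → V → Prop} {s t : V}

lemma exists_potential {u v : V} (huv : u ≠ v) (hvs : v ≠ s) (hut : u ≠ t)
    (hst : (u, v) ≠ (s, t)) {m : ℝ} (hm : m ≤ 0) :
    ∃ φ : V → ℝ, φ s = φ t ∧ φ v - φ u = m ∧ ∀ x y, m ≤ φ x - φ y := by
  classical
  by_cases hvt : v = t
  · have hus : u ≠ s := fun hus => hst (by rw [hus, hvt])
    refine ⟨fun x => if x = u then -m else 0, ?_, ?_, fun x y => ?_⟩
    · simp only [if_neg hus.symm, if_neg hut.symm]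
    · simp [huv.symm]
    · dsimp only
      split_ifs <;> linarith
  · refine ⟨fun x => if x = v then m else 0, ?_, ?_, fun x y => ?_⟩
    · simp only [if_neg hvs.symm, if_neg (Ne.symm hvt)]
    · simp [huv]
    · dsimp only
      split_ifs <;> linarith

lemma exists_nonneg_linCost_eq_of_potential (w : V × V → ℝ) {φ : V → ℝ} (hφ : φ s = φ t)
    (hw : ∀ P, IsPath A s t P → ∀ e ∈ arcsOf P, 0 ≤ w e + (φ e.1 - φ e.2)) :
    ∃ c' : V × V → ℝ, (∀ e, 0 ≤ c' e) ∧ ∀ P, IsPath A s t P → linCost c' P = linCost w P := by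
  refine ⟨fun e => max (w e + (φ e.1 - φ e.2)) 0, fun e => le_max_right _ _, fun P hP => ?_⟩
  rw [← hP.linCost_add_potential w hφ, linCost, linCost,
    List.map_congr_left fun e he => max_eq_left (hw P hP e he)]

lemma exists_nonneg_linCost_eq (w : V × V → ℝ)
    (hpair : ∀ P P', IsPath A s t P → IsPath A s t P' →
      ∀ e ∈ arcsOf P, ∀ f ∈ arcsOf P', e ≠ f → 0 ≤ w e + w f)
    (hst : IsPath A s t [s, t] → 0 ≤ w (s, t)) :
    ∃ c' : V × V → ℝ, (∀ e, 0 ≤ c' e) ∧ ∀ P, IsPath A s t P → linCost c' P = linCost w P := by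
  by_cases hneg : ∃ P, IsPath A s t P ∧ ∃ e ∈ arcsOf P, w e < 0
  · obtain ⟨P₀, hP₀, e₀, he₀, hw₀⟩ := hneg
    have hst₀ : e₀ ≠ (s, t) := by
      rintro rfl
      obtain rfl := hP₀.eq_pair_of_mem_arcsOf he₀
      linarith [hst hP₀]
    obtain ⟨φ, hφ, hφe₀, hφ_ge⟩ := exists_potential (fst_ne_snd_of_mem_arcsOf hP₀.2.2.2.1 he₀)
      (hP₀.snd_ne_source he₀) (hP₀.fst_ne_target he₀) hst₀ hw₀.le
    refine exists_nonneg_linCost_eq_of_potential w hφ fun P hP f hf => ?_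
    rcases eq_or_ne f e₀ with rfl | hfe
    · linarith
    · linarith [hpair P P₀ hP hP₀ f hf e₀ he₀ hfe, hφ_ge f.1 f.2]
  · push Not at hneg
    exact exists_nonneg_linCost_eq_of_potential w (φ := 0) rfl fun P hP e he => by
      simpa using hneg P hP e he

end Linearization

theorem stmt_5_general {V : Type*} (A : V → V → Prop) (s t : V)
    (c : V × V → ℝ) (Q : V × V → V × V → ℝ)
    (hc : ∀ e, 0 ≤ c e) (hQ0 : ∀ e f, 0 ≤ Q e f)
    (hQd : ∀ e, Q e e = 0)
    (L : ℕ) (hlen : ∀ P, IsPath A s t P → (arcsOf P).length = L)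
    (a : V × V → ℝ)
    (hsum : ∀ e f : V × V, A e.1 e.2 → A f.1 f.2 → e ≠ f → Q e f = a e + a f) :
    Linearizable A s t c Q ∧
      ∀ P, IsPath A s t P →
        cost c Q P = linCost (fun e => 2 * ((L : ℝ) - 1) * a e + c e) P := by
  set w : V × V → ℝ := fun e => 2 * ((L : ℝ) - 1) * a e + c e
  have hcost : ∀ P, IsPath A s t P → cost c Q P = linCost w P := fun P hP => by
    rw [cost_eq_linCost_of_weakSum hQd hsum hP.2.2.2.1 hP.2.2.2.2, hlen P hP]
  refine ⟨?_, hcost⟩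
  have hpair : ∀ P P', IsPath A s t P → IsPath A s t P' →
      ∀ e ∈ arcsOf P, ∀ f ∈ arcsOf P', e ≠ f → 0 ≤ w e + w f := by
    intro P P' hP hP' e he f hf hef
    have hL : 1 ≤ L := by
      rw [← hlen P hP, length_arcsOf]
      have := hP.1
      omega
    have hw : w e + w f = 2 * ((L : ℝ) - 1) * Q e f + c e + c f := by
      simp only [w, hsum e f (rel_of_mem_arcsOf hP.2.2.2.2 he)
        (rel_of_mem_arcsOf hP'.2.2.2.2 hf) hef]
      ring
    have := mul_nonneg (mul_nonneg zero_le_two (sub_nonneg.2 (Nat.one_le_cast.2 hL))) (hQ0 e f)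
    linarith [hc e, hc f]
  have hst : IsPath A s t [s, t] → 0 ≤ w (s, t) := fun h => by
    simpa [w, ← hlen _ h, arcsOf] using hc (s, t)
  obtain ⟨c', hc', hc'w⟩ := exists_nonneg_linCost_eq w hpair hst
  exact ⟨c', hc', fun P hP => (hcost P hP).trans (hc'w P hP).symm⟩

/-- If all `s`-`t` paths have the same length `L` and `Q` is a symmetric weak sum matrix
(`q_{ef} = a_e + a_f` for distinct arcs `e ≠ f`), then the instance is linearizable; in
particular `c'_e = 2(L-1)a_e + c_e` satisfies `C(P,c,Q) = C(P,c')` for every path. -/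
theorem stmt_5 {V : Type*} (A : V → V → Prop) (s t : V)
    (c : V × V → ℝ) (Q : V × V → V × V → ℝ)
    (hc : ∀ e, 0 ≤ c e) (hQ0 : ∀ e f, 0 ≤ Q e f)
    (hQs : ∀ e f, Q e f = Q f e) (hQd : ∀ e, Q e e = 0)
    (L : ℕ) (hlen : ∀ P, IsPath A s t P → (arcsOf P).length = L)
    (a : V × V → ℝ)
    (hsum : ∀ e f : V × V, A e.1 e.2 → A f.1 f.2 → e ≠ f → Q e f = a e + a f) :
    Linearizable A s t c Q ∧
      ∀ P, IsPath A s t P →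
        cost c Q P = linCost (fun e => 2 * ((L : ℝ) - 1) * a e + c e) P :=
  stmt_5_general A s t c Q hc hQ0 hQd L hlen a hsum
end

section
/- Let I = (K_n^*, s, t, c, Q) be a QSPP instance with n ≥ 4, c = 0, and q_{ef} = 0 for every pair of arcs not contained together in any s-t path. Then CP_k ≤ CP_{k+1} / (n−k−1) for every k = 3, …, n−2. -/
/-- The arc relation of the complete symmetric digraph `K_n^*` on vertices `1,…,n`
with source `1` and target `n`, from which the incoming arcs of the source, the
outgoing arcs of the target and the arc from source to target have been removed. -/
def knArc (n : ℕ) : ℕ → ℕ → Prop := fun i j =>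
  1 ≤ i ∧ i ≤ n ∧ 1 ≤ j ∧ j ≤ n ∧ i ≠ j ∧ j ≠ 1 ∧ i ≠ n ∧ ¬(i = 1 ∧ j = n)

/-- `CP_k`: the total cost (with zero linear costs) of all `s`-`t` paths of length `k`
in `K_n^*`. -/
noncomputable def CPsum (n : ℕ) (Q : ℕ × ℕ → ℕ × ℕ → ℝ) (k : ℕ) : ℝ :=
  ∑ᶠ (P : List ℕ) (_ : IsPath (knArc n) 1 n P ∧ P.length = k + 1),
    cost (fun _ => 0) Q P

/-!
Double counting over triples `(P, v, g)` with `P` an `s`-`t` path with `k` arcs, `v` one of the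
`n - k - 1` vertices off `P` and `g` an arc of `P`. Inserting `v` into `g` yields a path `P'`
with `k + 1` arcs in which `v` is an inner vertex, and `(P', v)` determines `(P, v, g)`. The
interactions of `P'` among arcs avoiding `v` are exactly those of `P` among arcs other than `g`.

Summed over `g`, these interactions count every pair of arcs of `P` at least `k - 2` times.
Conversely, two distinct arcs of `P'` have two distinct inner endpoints, so summing the
interactions among arcs avoiding `w` over the `k` inner vertices `w` of `P'` counts every pair
at most `k - 2` times (the diagonal `q_ee` vanishes). Hence
`(k - 2) (n - k - 1) CP_k ≤ (k - 2) CP_{k+1}`.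
-/

open Finset

section Arcs

variable {α : Type*} {l : List α} {a b c : α}

@[simp]
lemma arcsOf_cons_cons_s8 (a b : α) (l : List α) :
    arcsOf (a :: b :: l) = (a, b) :: arcsOf (b :: l) := rfl

lemma length_arcsOf_s8 (l : List α) : (arcsOf l).length = l.length - 1 := by
  simp [arcsOf]

lemma mem_arcsOf_iff_getElem {e : α × α} :
    e ∈ arcsOf l ↔ ∃ i, ∃ h : i + 1 < l.length, e = (l[i], l[i + 1]) := by
  simp only [arcsOf, List.mem_iff_getElem, List.getElem_zip, List.getElem_tail,
    List.length_zip, List.length_tail]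
  constructor <;> rintro ⟨i, hi, rfl⟩ <;> exact ⟨i, by omega, rfl⟩

lemma mem_of_mem_arcsOf {e : α × α} (h : e ∈ arcsOf l) : e.1 ∈ l ∧ e.2 ∈ l := by
  obtain ⟨i, hi, rfl⟩ := mem_arcsOf_iff_getElem.mp h
  exact ⟨List.getElem_mem _, List.getElem_mem _⟩

lemma arcsOf_append_cons (X : List α) (y : α) (Y : List α) :
    arcsOf (X ++ y :: Y) = arcsOf (X ++ [y]) ++ arcsOf (y :: Y) := by
  induction X with
  | nil => rfl
  | cons x X ih => cases X <;> simp_all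

lemma mem_arcsOf_iff : (a, b) ∈ arcsOf l ↔ ∃ X Y, l = X ++ a :: b :: Y := by
  refine ⟨fun h => ?_, ?_⟩
  · induction l with
    | nil => simp [arcsOf] at h
    | cons x t ih =>
      cases t with
      | nil => simp [arcsOf] at h
      | cons z t =>
        rcases List.mem_cons.mp h with h | h
        · obtain ⟨rfl, rfl⟩ := Prod.mk.inj h
          exact ⟨[], t, rfl⟩
        · obtain ⟨X, Y, hXY⟩ := ih h
          exact ⟨x :: X, Y, by simp [hXY]⟩
  · rintro ⟨X, Y, rfl⟩
    rw [arcsOf_append_cons]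
    simp

lemma forall_mem_arcsOf_of_isChain {R : α → α → Prop} (h : l.IsChain R) :
    ∀ e ∈ arcsOf l, R e.1 e.2 := by
  rintro ⟨a, b⟩ hab
  obtain ⟨X, Y, hXY⟩ := mem_arcsOf_iff.mp hab
  exact List.isChain_iff_forall_rel_of_append_cons_cons.mp h hXY

lemma nodup_arcsOf_s8 (h : l.Nodup) : (arcsOf l).Nodup := by
  refine List.Nodup.of_map Prod.snd ?_
  have : (arcsOf l).map Prod.snd = l.tail := List.map_snd_zip (by simp)
  exact this ▸ h.sublist (List.tail_sublist l)

lemma fst_eq_of_mem_arcsOf (hl : l.Nodup) (h₁ : (a, c) ∈ arcsOf l) (h₂ : (b, c) ∈ arcsOf l) :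
    a = b := by
  obtain ⟨i, hi, hi'⟩ := mem_arcsOf_iff_getElem.mp h₁
  obtain ⟨j, hj, hj'⟩ := mem_arcsOf_iff_getElem.mp h₂
  simp only [Prod.mk.injEq] at hi' hj'
  have : i + 1 = j + 1 := hl.getElem_inj_iff.mp (hi'.2.symm.trans hj'.2)
  simp_all

lemma snd_eq_of_mem_arcsOf (hl : l.Nodup) (h₁ : (a, b) ∈ arcsOf l) (h₂ : (a, c) ∈ arcsOf l) :
    b = c := by
  obtain ⟨i, hi, hi'⟩ := mem_arcsOf_iff_getElem.mp h₁
  obtain ⟨j, hj, hj'⟩ := mem_arcsOf_iff_getElem.mp h₂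
  simp only [Prod.mk.injEq] at hi' hj'
  have : i = j := hl.getElem_inj_iff.mp (hi'.1.symm.trans hj'.1)
  simp_all

end Arcs

section Paths

variable {V : Type*} {A : V → V → Prop} {s t : V} {P : List V}

lemma IsPath.getElem_zero (hP : IsPath A s t P) {h : 0 < P.length} : P[0] = s := by
  have h := hP.2.1
  rw [List.head?_eq_getElem?, List.getElem?_eq_some_iff] at h
  exact h.2

lemma IsPath.getElem_length_sub_one (hP : IsPath A s t P) {h : P.length - 1 < P.length} :
    P[P.length - 1] = t := by
  have h := hP.2.2.1
  rw [List.getLast?_eq_getElem?, List.getElem?_eq_some_iff] at h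
  exact h.2

lemma IsPath.source_mem (hP : IsPath A s t P) : s ∈ P :=
  hP.getElem_zero (h := by have := hP.1; omega) ▸ List.getElem_mem _

lemma IsPath.target_mem (hP : IsPath A s t P) : t ∈ P :=
  hP.getElem_length_sub_one (h := by have := hP.1; omega) ▸ List.getElem_mem _

lemma IsPath.mem_of_forall_adj {U : Set V} (hP : IsPath A s t P)
    (hU : ∀ a b, A a b → a ∈ U ∧ b ∈ U) {x : V} (hx : x ∈ P) : x ∈ U := by
  have hA := List.isChain_iff_getElem.mp hP.2.2.2.2
  obtain ⟨m, hm, rfl⟩ := List.mem_iff_getElem.mp hx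
  by_cases hm' : m + 1 < P.length
  · exact (hU _ _ (hA m hm')).1
  · obtain ⟨i, rfl⟩ : ∃ i, m = i + 1 := ⟨m - 1, by have := hP.1; omega⟩
    exact (hU _ _ (hA i hm)).2

lemma finite_setOf_isPath_length_eq {U : Set V} (hU : U.Finite)
    (hAU : ∀ a b, A a b → a ∈ U ∧ b ∈ U) (m : ℕ) :
    {P : List V | IsPath A s t P ∧ P.length = m}.Finite := by
  have := hU.to_subtype
  refine ((List.finite_length_eq U m).image (List.map Subtype.val)).subset ?_
  rintro P ⟨hP, rfl⟩
  lift P to List U using fun x hx => hP.mem_of_forall_adj hAU hx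
  exact ⟨P, by simp, rfl⟩

variable [DecidableEq V]

lemma cost_zero_eq_sum (Q : V × V → V × V → ℝ) (hP : P.Nodup) :
    cost (fun _ => 0) Q P = ∑ e ∈ (arcsOf P).toFinset, ∑ f ∈ (arcsOf P).toFinset, Q e f := by
  simp [cost, linCost, List.sum_toFinset _ (nodup_arcsOf_s8 hP)]

def innerVertices (s t : V) (P : List V) : Finset V := P.toFinset \ {s, t}

lemma IsPath.card_innerVertices (hP : IsPath A s t P) :
    #(innerVertices s t P) = P.length - 2 := by
  have hlen := hP.1
  have hst : s ≠ t := by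
    rw [← hP.getElem_zero (h := by omega), ← hP.getElem_length_sub_one (h := by omega), Ne,
      hP.2.2.2.1.getElem_inj_iff]
    omega
  rw [innerVertices,
    card_sdiff_of_subset (by simp [insert_subset_iff, hP.source_mem, hP.target_mem]),
    List.toFinset_card_of_nodup hP.2.2.2.1, card_pair hst]

lemma IsPath.getElem_mem_innerVertices (hP : IsPath A s t P) {m : ℕ} (hm₀ : 0 < m)
    (hm : m + 1 < P.length) : P[m] ∈ innerVertices s t P := by
  have hnd := hP.2.2.2.1
  have hs : P[m] ≠ s := by
    rw [← hP.getElem_zero (h := by omega), Ne, hnd.getElem_inj_iff]; omega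
  have ht : P[m] ≠ t := by
    rw [← hP.getElem_length_sub_one (h := by omega), Ne, hnd.getElem_inj_iff]; omega
  simp [innerVertices, hs, ht]

lemma IsPath.exists_two_innerVertices_of_lt (hP : IsPath A s t P) (hlen : 4 ≤ P.length)
    {i j : ℕ} (hij : i < j) (hj : j + 1 < P.length) :
    ∃ w₁ ∈ innerVertices s t P, ∃ w₂ ∈ innerVertices s t P, w₁ ≠ w₂ ∧
      w₁ ∈ ({P[i], P[i + 1], P[j], P[j + 1]} : Finset V) ∧
      w₂ ∈ ({P[i], P[i + 1], P[j], P[j + 1]} : Finset V) := by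
  have hnd := hP.2.2.2.1
  by_cases hji : j = i + 1
  · subst hji
    rcases Nat.eq_zero_or_pos i with rfl | hi
    · exact ⟨P[1], hP.getElem_mem_innerVertices (by omega) (by omega),
        P[2], hP.getElem_mem_innerVertices (by omega) (by omega),
        by simp [hnd.getElem_inj_iff], by simp, by simp⟩
    · exact ⟨P[i], hP.getElem_mem_innerVertices hi (by omega),
        P[i + 1], hP.getElem_mem_innerVertices (by omega) hj,
        by simp [hnd.getElem_inj_iff], by simp, by simp⟩
  · exact ⟨P[i + 1], hP.getElem_mem_innerVertices (by omega) (by omega),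
      P[j], hP.getElem_mem_innerVertices (by omega) hj,
      by simp [hnd.getElem_inj_iff]; omega, by simp, by simp⟩

lemma IsPath.exists_two_innerVertices_mem_ends (hP : IsPath A s t P) (hlen : 4 ≤ P.length)
    {e f : V × V} (he : e ∈ arcsOf P) (hf : f ∈ arcsOf P) (hef : e ≠ f) :
    ∃ w₁ ∈ innerVertices s t P, ∃ w₂ ∈ innerVertices s t P, w₁ ≠ w₂ ∧
      w₁ ∈ ({e.1, e.2, f.1, f.2} : Finset V) ∧ w₂ ∈ ({e.1, e.2, f.1, f.2} : Finset V) := by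
  obtain ⟨i, hi, rfl⟩ := mem_arcsOf_iff_getElem.mp he
  obtain ⟨j, hj, rfl⟩ := mem_arcsOf_iff_getElem.mp hf
  have hij : i ≠ j := by rintro rfl; exact hef rfl
  rcases Nat.lt_or_gt_of_ne hij with hij | hji
  · exact hP.exists_two_innerVertices_of_lt hlen hij hj
  · have hends : ({P[j], P[j + 1], P[i], P[i + 1]} : Finset V) =
        {P[i], P[i + 1], P[j], P[j + 1]} := by
      ext; simp only [mem_insert, mem_singleton]; tauto
    simpa only [hends] using hP.exists_two_innerVertices_of_lt hlen hji hi

end Paths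

section DoubleCounting

variable {α β : Type*}

lemma sum_sum_filter_sum_filter (W : Finset β) (S : Finset α) (p : β → α → Prop)
    [∀ w, DecidablePred (p w)] (Q : α → α → ℝ) :
    ∑ w ∈ W, ∑ e ∈ S with p w e, ∑ f ∈ S with p w f, Q e f =
      ∑ e ∈ S, ∑ f ∈ S, #{w ∈ W | p w e ∧ p w f} * Q e f := by
  calc ∑ w ∈ W, ∑ e ∈ S with p w e, ∑ f ∈ S with p w f, Q e f
      = ∑ w ∈ W, ∑ e ∈ S, ∑ f ∈ S, if p w e ∧ p w f then Q e f else 0 := by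
        refine sum_congr rfl fun w _ => ?_
        rw [sum_filter]
        refine sum_congr rfl fun e _ => ?_
        by_cases he : p w e <;> simp [he, sum_filter]
    _ = ∑ e ∈ S, ∑ f ∈ S, ∑ w ∈ W, if p w e ∧ p w f then Q e f else 0 := by
        rw [sum_comm]; exact sum_congr rfl fun _ _ => sum_comm
    _ = ∑ e ∈ S, ∑ f ∈ S, #{w ∈ W | p w e ∧ p w f} * Q e f := by
        simp only [← sum_filter, sum_const, nsmul_eq_mul]

variable {Q : α → α → ℝ}

lemma card_sub_two_mul_sum_le_sum_sum_erase [DecidableEq α] (S : Finset α)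
    (hQ : ∀ e f, 0 ≤ Q e f) :
    ((#S : ℝ) - 2) * ∑ e ∈ S, ∑ f ∈ S, Q e f ≤
      ∑ g ∈ S, ∑ e ∈ S.erase g, ∑ f ∈ S.erase g, Q e f := by
  simp_rw [← filter_ne', sum_sum_filter_sum_filter S S (fun g e => e ≠ g), mul_sum]
  refine sum_le_sum fun e _ => sum_le_sum fun f _ => mul_le_mul_of_nonneg_right ?_ (hQ e f)
  have hsub : S \ {e, f} ⊆ {g ∈ S | e ≠ g ∧ f ≠ g} := by
    intro g hg
    simp only [mem_sdiff, mem_insert, mem_singleton, not_or] at hg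
    exact mem_filter.mpr ⟨hg.1, Ne.symm hg.2.1, Ne.symm hg.2.2⟩
  have hcard : #S ≤ #{g ∈ S | e ≠ g ∧ f ≠ g} + 2 :=
    card_le_card_sdiff_add_card.trans (add_le_add (card_le_card hsub) card_le_two)
  have : (#S : ℝ) ≤ #{g ∈ S | e ≠ g ∧ f ≠ g} + 2 := by exact_mod_cast hcard
  linarith

lemma sum_sum_filter_sum_filter_le [DecidableEq β] (W : Finset β) (S : Finset α)
    (p : β → α → Prop) [∀ w, DecidablePred (p w)] (hQ : ∀ e f, 0 ≤ Q e f)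
    (hW : ∀ e ∈ S, ∀ f ∈ S, Q e f ≠ 0 →
      ∃ w₁ ∈ W, ∃ w₂ ∈ W, w₁ ≠ w₂ ∧ ¬(p w₁ e ∧ p w₁ f) ∧ ¬(p w₂ e ∧ p w₂ f)) :
    ∑ w ∈ W, ∑ e ∈ S with p w e, ∑ f ∈ S with p w f, Q e f ≤
      ((#W : ℝ) - 2) * ∑ e ∈ S, ∑ f ∈ S, Q e f := by
  simp_rw [sum_sum_filter_sum_filter, mul_sum]
  refine sum_le_sum fun e he => sum_le_sum fun f hf => ?_
  rcases eq_or_ne (Q e f) 0 with hef | hef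
  · simp [hef]
  refine mul_le_mul_of_nonneg_right ?_ (hQ e f)
  obtain ⟨w₁, hw₁, w₂, hw₂, hne, hw₁e, hw₂e⟩ := hW e he f hf hef
  have hsub : {w ∈ W | p w e ∧ p w f} ⊆ W \ {w₁, w₂} := by
    intro w hw
    simp only [mem_filter] at hw
    simp only [mem_sdiff, mem_insert, mem_singleton]
    exact ⟨hw.1, by rintro (rfl | rfl) <;> tauto⟩
  have hcard : #{w ∈ W | p w e ∧ p w f} + 2 ≤ #W := by
    have hpair : {w₁, w₂} ⊆ W := by simp [insert_subset_iff, hw₁, hw₂]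
    have := card_sdiff_add_card_eq_card hpair
    rw [card_pair hne] at this
    have := card_le_card hsub
    omega
  have : (#{w ∈ W | p w e ∧ p w f} : ℝ) + 2 ≤ #W := by exact_mod_cast hcard
  linarith

end DoubleCounting

section Insertion

variable {α : Type*} {X Y : List α} {a b v : α}

lemma nodup_append_insert (hnd : (X ++ a :: b :: Y).Nodup) (hv : v ∉ X ++ a :: b :: Y) :
    (X ++ a :: v :: b :: Y).Nodup := by
  have hmid := List.nodup_middle (l₁ := X ++ [a]) (a := v) (l₂ := b :: Y)
  simp only [List.append_assoc, List.cons_append, List.nil_append] at hmid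
  rw [hmid, List.nodup_cons]
  exact ⟨by simpa using hv, by simpa using hnd⟩

lemma IsPath.append_insert {A : α → α → Prop} {s t : α}
    (hP : IsPath A s t (X ++ a :: b :: Y)) (hv : v ∉ X ++ a :: b :: Y)
    (hav : A a v) (hvb : A v b) : IsPath A s t (X ++ a :: v :: b :: Y) := by
  obtain ⟨hlen, hs, ht, hnd, hA⟩ := hP
  change List.IsChain A _ at hA
  refine ⟨by simp only [List.length_append, List.length_cons]; omega, ?_, ?_,
    nodup_append_insert hnd hv, ?_⟩
  · cases X <;> simpa using hs
  · simpa [List.getLast?_append] using ht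
  · change List.IsChain A _
    simp_all [List.isChain_append_cons_cons, List.isChain_cons_cons]

variable [DecidableEq α]

lemma filter_arcsOf_append_insert (hnd : (X ++ a :: b :: Y).Nodup)
    (hv : v ∉ X ++ a :: b :: Y) :
    {e ∈ (arcsOf (X ++ a :: v :: b :: Y)).toFinset | e.1 ≠ v ∧ e.2 ≠ v} =
      (arcsOf (X ++ a :: b :: Y)).toFinset.erase (a, b) := by
  have harcs : arcsOf (X ++ a :: b :: Y) = arcsOf (X ++ [a]) ++ (a, b) :: arcsOf (b :: Y) := by
    rw [arcsOf_append_cons]; rfl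
  have harcs' : arcsOf (X ++ a :: v :: b :: Y) =
      arcsOf (X ++ [a]) ++ (a, v) :: (v, b) :: arcsOf (b :: Y) := by
    rw [arcsOf_append_cons]; rfl
  have hab := nodup_arcsOf_s8 hnd
  rw [harcs, List.nodup_append, List.nodup_cons] at hab
  have hL : ∀ e ∈ arcsOf (X ++ [a]), e.1 ≠ v ∧ e.2 ≠ v := fun e he => by
    have := mem_of_mem_arcsOf he
    constructor <;> rintro rfl <;> simp_all
  have hR : ∀ e ∈ arcsOf (b :: Y), e.1 ≠ v ∧ e.2 ≠ v := fun e he => by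
    have := mem_of_mem_arcsOf he
    constructor <;> rintro rfl <;> simp_all
  ext e
  simp only [mem_filter, mem_erase, List.mem_toFinset, harcs, harcs', List.mem_append,
    List.mem_cons]
  constructor
  · rintro ⟨he | rfl | rfl | he, hv₁, hv₂⟩
    · exact ⟨fun h => hab.2.2 _ he _ (List.mem_cons_self ..) h, .inl he⟩
    · exact absurd rfl hv₂
    · exact absurd rfl hv₁
    · exact ⟨fun h => hab.2.1.1 (h ▸ he), .inr (.inr he)⟩
  · rintro ⟨hne, he | rfl | he⟩
    · exact ⟨.inl he, hL e he⟩
    · exact absurd rfl hne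
    · exact ⟨.inr (.inr (.inr he)), hR e he⟩

def insertAfter (v a : α) : List α → List α
  | [] => []
  | x :: xs => if x = a then x :: v :: xs else x :: insertAfter v a xs

lemma insertAfter_append_cons (hX : a ∉ X) (v : α) (R : List α) :
    insertAfter v a (X ++ a :: R) = X ++ a :: v :: R := by
  induction X with
  | nil => simp [insertAfter]
  | cons x X ih =>
    simp only [List.mem_cons, not_or] at hX
    simp [insertAfter, Ne.symm hX.1, ih hX.2]

variable {P : List α}

lemma exists_insertAfter_eq_append (hnd : P.Nodup) (hab : (a, b) ∈ arcsOf P) (v : α) :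
    ∃ X Y, P = X ++ a :: b :: Y ∧ insertAfter v a P = X ++ a :: v :: b :: Y := by
  obtain ⟨X, Y, rfl⟩ := mem_arcsOf_iff.mp hab
  have haX : a ∉ X := fun h => (List.nodup_append.mp hnd).2.2 a h a (by simp) rfl
  exact ⟨X, Y, rfl, insertAfter_append_cons haX v _⟩

lemma length_insertAfter (hnd : P.Nodup) (hab : (a, b) ∈ arcsOf P) :
    (insertAfter v a P).length = P.length + 1 := by
  obtain ⟨X, Y, rfl, h⟩ := exists_insertAfter_eq_append hnd hab v
  simp only [h, List.length_append, List.length_cons]; omega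

lemma mem_arcsOf_insertAfter (hnd : P.Nodup) (hab : (a, b) ∈ arcsOf P) :
    (a, v) ∈ arcsOf (insertAfter v a P) := by
  obtain ⟨X, Y, rfl, h⟩ := exists_insertAfter_eq_append hnd hab v
  exact h ▸ mem_arcsOf_iff.mpr ⟨X, b :: Y, rfl⟩

lemma erase_insertAfter (hnd : P.Nodup) (hab : (a, b) ∈ arcsOf P) (hv : v ∉ P) :
    (insertAfter v a P).erase v = P := by
  obtain ⟨X, Y, rfl, h⟩ := exists_insertAfter_eq_append hnd hab v
  have hv' : v ∉ X ++ [a] := by simp_all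
  rw [h, show X ++ a :: v :: b :: Y = (X ++ [a]) ++ v :: b :: Y by simp,
    List.erase_append_right _ hv', List.erase_cons_head]
  simp

lemma filter_arcsOf_insertAfter (hnd : P.Nodup) (hab : (a, b) ∈ arcsOf P) (hv : v ∉ P) :
    {e ∈ (arcsOf (insertAfter v a P)).toFinset | e.1 ≠ v ∧ e.2 ≠ v} =
      (arcsOf P).toFinset.erase (a, b) := by
  obtain ⟨X, Y, rfl, h⟩ := exists_insertAfter_eq_append hnd hab v
  rw [h, filter_arcsOf_append_insert hnd hv]

lemma nodup_insertAfter (hnd : P.Nodup) (hab : (a, b) ∈ arcsOf P) (hv : v ∉ P) :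
    (insertAfter v a P).Nodup := by
  obtain ⟨X, Y, rfl, h⟩ := exists_insertAfter_eq_append hnd hab v
  exact h ▸ nodup_append_insert hnd hv

lemma insertAfter_injective {P₁ P₂ : List α} {a₁ b₁ a₂ b₂ : α} (hnd₁ : P₁.Nodup)
    (hnd₂ : P₂.Nodup) (hab₁ : (a₁, b₁) ∈ arcsOf P₁) (hab₂ : (a₂, b₂) ∈ arcsOf P₂)
    (hv₁ : v ∉ P₁) (hv₂ : v ∉ P₂) (h : insertAfter v a₁ P₁ = insertAfter v a₂ P₂) :
    P₁ = P₂ ∧ (a₁, b₁) = (a₂, b₂) := by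
  have hP : P₁ = P₂ := by
    rw [← erase_insertAfter hnd₁ hab₁ hv₁, h, erase_insertAfter hnd₂ hab₂ hv₂]
  subst hP
  have ha : a₁ = a₂ := fst_eq_of_mem_arcsOf (nodup_insertAfter hnd₁ hab₂ hv₁)
    (h ▸ mem_arcsOf_insertAfter hnd₁ hab₁) (mem_arcsOf_insertAfter hnd₁ hab₂)
  subst ha
  exact ⟨rfl, by rw [snd_eq_of_mem_arcsOf hnd₁ hab₁ hab₂]⟩

lemma IsPath.insertAfter_of_adj {A : α → α → Prop} {s t : α} (hP : IsPath A s t P)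
    (hab : (a, b) ∈ arcsOf P) (hv : v ∉ P) (hav : A a v) (hvb : A v b) :
    IsPath A s t (insertAfter v a P) := by
  obtain ⟨X, Y, rfl, h⟩ := exists_insertAfter_eq_append hP.2.2.2.1 hab v
  exact h ▸ hP.append_insert hv hav hvb

end Insertion

section AvoidingCost

variable {V : Type*} [DecidableEq V] {A : V → V → Prop} {s t : V} {P : List V}
  {Q : V × V → V × V → ℝ}

/-- If `P` arose by inserting `w` into an arc `g`, this is the cost of the original path without
the interactions involving `g` (`filter_arcsOf_insertAfter`). -/
noncomputable def avoidingCost (Q : V × V → V × V → ℝ) (P : List V) (w : V) : ℝ :=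
  ∑ e ∈ (arcsOf P).toFinset with e.1 ≠ w ∧ e.2 ≠ w,
    ∑ f ∈ (arcsOf P).toFinset with f.1 ≠ w ∧ f.2 ≠ w, Q e f

lemma avoidingCost_nonneg (hQ : ∀ e f, 0 ≤ Q e f) (P : List V) (w : V) :
    0 ≤ avoidingCost Q P w :=
  sum_nonneg fun e _ => sum_nonneg fun f _ => hQ e f

lemma sub_two_mul_cost_le_sum_avoidingCost_insertAfter (hQ : ∀ e f, 0 ≤ Q e f) {k : ℕ}
    (hnd : P.Nodup) (hlen : P.length = k + 1) {v : V} (hv : v ∉ P) :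
    ((k : ℝ) - 2) * cost (fun _ => 0) Q P ≤
      ∑ g ∈ (arcsOf P).toFinset, avoidingCost Q (insertAfter v g.1 P) v := by
  have hcard : #(arcsOf P).toFinset = k := by
    rw [List.toFinset_card_of_nodup (nodup_arcsOf_s8 hnd), length_arcsOf_s8, hlen]; rfl
  have := card_sub_two_mul_sum_le_sum_sum_erase (arcsOf P).toFinset hQ
  rw [hcard] at this
  rw [cost_zero_eq_sum Q hnd]
  refine this.trans_eq (sum_congr rfl fun g hg => ?_)
  rw [avoidingCost, filter_arcsOf_insertAfter hnd (List.mem_toFinset.mp hg) hv]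

lemma IsPath.sum_avoidingCost_le (hP : IsPath A s t P) (hQ : ∀ e f, 0 ≤ Q e f)
    (hQd : ∀ e, Q e e = 0) {k : ℕ} (hk : 2 ≤ k) (hlen : P.length = k + 2) :
    ∑ w ∈ innerVertices s t P, avoidingCost Q P w ≤ ((k : ℝ) - 2) * cost (fun _ => 0) Q P := by
  have hcard : #(innerVertices s t P) = k := by rw [hP.card_innerVertices, hlen]; rfl
  rw [cost_zero_eq_sum Q hP.2.2.2.1, ← hcard]
  refine sum_sum_filter_sum_filter_le _ _ _ hQ fun e he f hf hef => ?_
  have hne : e ≠ f := by rintro rfl; exact hef (hQd e)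
  obtain ⟨w₁, hw₁, w₂, hw₂, hw, hw₁e, hw₂e⟩ := hP.exists_two_innerVertices_mem_ends (by omega)
    (List.mem_toFinset.mp he) (List.mem_toFinset.mp hf) hne
  simp only [mem_insert, mem_singleton] at hw₁e hw₂e
  exact ⟨w₁, hw₁, w₂, hw₂, hw, by tauto, by tauto⟩

end AvoidingCost

section CompleteDigraph

variable {n : ℕ} {P : List ℕ} {a b v : ℕ}

lemma knArc_mem_Icc (h : knArc n a b) : a ∈ Icc 1 n ∧ b ∈ Icc 1 n := by
  simp only [knArc, mem_Icc] at *; omega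

lemma knArc_subdivide (h : knArc n a b) (hv : v ∈ Icc 1 n) (hv₁ : v ≠ 1) (hvn : v ≠ n)
    (hva : v ≠ a) (hvb : v ≠ b) : knArc n a v ∧ knArc n v b := by
  simp only [knArc, mem_Icc] at *; omega

noncomputable def knPaths (n m : ℕ) : Finset (List ℕ) :=
  (finite_setOf_isPath_length_eq (s := 1) (t := n) (Icc 1 n).finite_toSet
    (fun _ _ => knArc_mem_Icc) m).toFinset

lemma mem_knPaths {m : ℕ} : P ∈ knPaths n m ↔ IsPath (knArc n) 1 n P ∧ P.length = m :=
  Set.Finite.mem_toFinset _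

lemma CPsum_eq_sum (n : ℕ) (Q : ℕ × ℕ → ℕ × ℕ → ℝ) (k : ℕ) :
    CPsum n Q k = ∑ P ∈ knPaths n (k + 1), cost (fun _ => 0) Q P := by
  rw [CPsum, ← finsum_mem_coe_finset, knPaths, Set.Finite.coe_toFinset]
  rfl

lemma IsPath.card_Icc_sdiff (hP : IsPath (knArc n) 1 n P) :
    #(Icc 1 n \ P.toFinset) = n - P.length := by
  have hsub : P.toFinset ⊆ Icc 1 n := fun x hx =>
    hP.mem_of_forall_adj (U := ↑(Icc 1 n)) (fun _ _ => knArc_mem_Icc) (List.mem_toFinset.mp hx)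
  rw [card_sdiff_of_subset hsub, List.toFinset_card_of_nodup hP.2.2.2.1, Nat.card_Icc,
    Nat.add_sub_cancel]

lemma sum_knPaths_sum_Icc_sdiff {m : ℕ} (hm : m ≤ n) (F : List ℕ → ℝ) :
    ∑ P ∈ knPaths n m, ∑ _v ∈ Icc 1 n \ P.toFinset, F P =
      ((n : ℝ) - m) * ∑ P ∈ knPaths n m, F P := by
  rw [mul_sum]
  refine sum_congr rfl fun P hP => ?_
  obtain ⟨hPath, rfl⟩ := mem_knPaths.mp hP
  rw [sum_const, hPath.card_Icc_sdiff, nsmul_eq_mul, Nat.cast_sub hm]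

lemma IsPath.insertAfter_knArc (hP : IsPath (knArc n) 1 n P) (hab : (a, b) ∈ arcsOf P)
    (hv : v ∈ Icc 1 n) (hvP : v ∉ P) :
    IsPath (knArc n) 1 n (insertAfter v a P) ∧ v ∈ innerVertices 1 n (insertAfter v a P) := by
  have hv₁ : v ≠ 1 := by rintro rfl; exact hvP hP.source_mem
  have hvn : v ≠ n := by rintro rfl; exact hvP hP.target_mem
  have hadj := knArc_subdivide (forall_mem_arcsOf_of_isChain hP.2.2.2.2 _ hab) hv hv₁ hvn
    (by rintro rfl; exact hvP (mem_of_mem_arcsOf hab).1)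
    (by rintro rfl; exact hvP (mem_of_mem_arcsOf hab).2)
  have hvins := (mem_of_mem_arcsOf (mem_arcsOf_insertAfter (v := v) hP.2.2.2.1 hab)).2
  exact ⟨hP.insertAfter_of_adj hab hvP hadj.1 hadj.2, by simp [innerVertices, hvins, hv₁, hvn]⟩

lemma sum_avoidingCost_insertAfter_le {Q : ℕ × ℕ → ℕ × ℕ → ℝ} (hQ : ∀ e f, 0 ≤ Q e f)
    (m : ℕ) :
    ∑ P ∈ knPaths n m, ∑ v ∈ Icc 1 n \ P.toFinset, ∑ g ∈ (arcsOf P).toFinset,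
        avoidingCost Q (insertAfter v g.1 P) v ≤
      ∑ P' ∈ knPaths n (m + 1), ∑ w ∈ innerVertices 1 n P', avoidingCost Q P' w := by
  set T := (knPaths n m).sigma fun P => (Icc 1 n \ P.toFinset).sigma fun _ => (arcsOf P).toFinset
  let ψ : (Σ _ : List ℕ, Σ _ : ℕ, ℕ × ℕ) → Σ _ : List ℕ, ℕ :=
    fun x => ⟨insertAfter x.2.1 x.2.2.1 x.1, x.2.1⟩
  have hT : ∀ P v a b, ⟨P, v, (a, b)⟩ ∈ T → IsPath (knArc n) 1 n P ∧ P.length = m ∧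
      v ∈ Icc 1 n ∧ v ∉ P ∧ (a, b) ∈ arcsOf P := by
    intro P v a b hx
    simp only [T, mem_sigma, mem_knPaths, mem_sdiff, List.mem_toFinset] at hx
    exact ⟨hx.1.1, hx.1.2, hx.2.1.1, hx.2.1.2, hx.2.2⟩
  have hmaps : ∀ x ∈ T, ψ x ∈ (knPaths n (m + 1)).sigma (innerVertices 1 n) := by
    rintro ⟨P, v, a, b⟩ hx
    obtain ⟨hP, hlen, hv, hvP, hg⟩ := hT _ _ _ _ hx
    obtain ⟨hP', hv'⟩ := hP.insertAfter_knArc hg hv hvP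
    simp only [ψ, mem_sigma, mem_knPaths]
    exact ⟨⟨hP', by rw [length_insertAfter hP.2.2.2.1 hg, hlen]⟩, hv'⟩
  have hinj : Set.InjOn ψ T := by
    rintro ⟨P₁, v₁, a₁, b₁⟩ hx ⟨P₂, v₂, a₂, b₂⟩ hy hxy
    obtain ⟨hP₁, -, -, hvP₁, hg₁⟩ := hT _ _ _ _ hx
    obtain ⟨hP₂, -, -, hvP₂, hg₂⟩ := hT _ _ _ _ hy
    simp only [ψ, Sigma.mk.inj_iff, heq_eq_eq] at hxy
    obtain ⟨hins, rfl⟩ := hxy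
    obtain ⟨rfl, hg⟩ := insertAfter_injective hP₁.2.2.2.1 hP₂.2.2.2.1 hg₁ hg₂ hvP₁ hvP₂ hins
    rw [hg]
  calc _ = ∑ x ∈ T, avoidingCost Q (ψ x).1 (ψ x).2 := by simp only [T, ψ, sum_sigma]
    _ = ∑ y ∈ T.image ψ, avoidingCost Q y.1 y.2 := by rw [sum_image hinj]
    _ ≤ ∑ y ∈ (knPaths n (m + 1)).sigma (innerVertices 1 n), avoidingCost Q y.1 y.2 :=
        sum_le_sum_of_subset_of_nonneg (image_subset_iff.mpr hmaps)
          fun y _ _ => avoidingCost_nonneg hQ y.1 y.2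
    _ = _ := sum_sigma _ _ _

end CompleteDigraph

theorem stmt_8_general (n : ℕ) (Q : ℕ × ℕ → ℕ × ℕ → ℝ)
    (hQ0 : ∀ e f, 0 ≤ Q e f) (hQd : ∀ e, Q e e = 0) :
    ∀ k, 3 ≤ k → k ≤ n - 2 →
      CPsum n Q k ≤ CPsum n Q (k + 1) / ((n : ℝ) - k - 1) := by
  intro k hk3 hkn
  have hk : (0 : ℝ) < k - 2 := by
    have : (3 : ℝ) ≤ k := by exact_mod_cast hk3
    linarith
  have hd : (0 : ℝ) < n - k - 1 := by
    have : (k : ℝ) + 2 ≤ n := by exact_mod_cast (by omega : k + 2 ≤ n)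
    linarith
  rw [CPsum_eq_sum, CPsum_eq_sum, le_div_iff₀ hd, ← mul_le_mul_iff_right₀ hk]
  calc ((k : ℝ) - 2) * ((∑ P ∈ knPaths n (k + 1), cost (fun _ => 0) Q P) * (n - k - 1))
      = ∑ P ∈ knPaths n (k + 1), ∑ _v ∈ Icc 1 n \ P.toFinset,
          ((k : ℝ) - 2) * cost (fun _ => 0) Q P := by
        rw [sum_knPaths_sum_Icc_sdiff (by omega), ← mul_sum]
        push_cast; ring
    _ ≤ ∑ P ∈ knPaths n (k + 1), ∑ v ∈ Icc 1 n \ P.toFinset, ∑ g ∈ (arcsOf P).toFinset,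
          avoidingCost Q (insertAfter v g.1 P) v := by
        refine sum_le_sum fun P hP => sum_le_sum fun v hv => ?_
        obtain ⟨hPath, hlen⟩ := mem_knPaths.mp hP
        exact sub_two_mul_cost_le_sum_avoidingCost_insertAfter hQ0 hPath.2.2.2.1 hlen
          fun h => (mem_sdiff.mp hv).2 (List.mem_toFinset.mpr h)
    _ ≤ ∑ P ∈ knPaths n (k + 2), ∑ w ∈ innerVertices 1 n P, avoidingCost Q P w :=
        sum_avoidingCost_insertAfter_le hQ0 (k + 1)
    _ ≤ ∑ P ∈ knPaths n (k + 2), ((k : ℝ) - 2) * cost (fun _ => 0) Q P := by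
        refine sum_le_sum fun P hP => ?_
        obtain ⟨hPath, hlen⟩ := mem_knPaths.mp hP
        exact hPath.sum_avoidingCost_le hQ0 hQd (by omega) hlen
    _ = ((k : ℝ) - 2) * ∑ P ∈ knPaths n (k + 2), cost (fun _ => 0) Q P := (mul_sum ..).symm

/-- On `K_n^*` (`n ≥ 4`), `CP_k ≤ CP_{k+1} / (n-k-1)` for `k = 3,…,n-2`. -/
theorem stmt_8 (n : ℕ) (hn : 4 ≤ n) (Q : ℕ × ℕ → ℕ × ℕ → ℝ)
    (hQ0 : ∀ e f, 0 ≤ Q e f) (hQs : ∀ e f, Q e f = Q f e) (hQd : ∀ e, Q e e = 0)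
    (hQpath : ∀ e f,
      (¬ ∃ P, IsPath (knArc n) 1 n P ∧ e ∈ arcsOf P ∧ f ∈ arcsOf P) → Q e f = 0) :
    ∀ k, 3 ≤ k → k ≤ n - 2 →
      CPsum n Q k ≤ CPsum n Q (k + 1) / ((n : ℝ) - k - 1) :=
  stmt_8_general n Q hQ0 hQd
end

section
/- Let I = (K_4^*, s, t, c, Q) be a QSPP instance with s = v_1, t = v_4, c = 0, and q_{ef} = 0 for every pair of arcs not contained together in any s-t path. Let P_1 = (v_1,v_2,v_4), P_2 = (v_1,v_3,v_4), P_3 = (v_1,v_2,v_3,v_4), P_4 = (v_1,v_3,v_2,v_4) be the four s-t paths. Then I is linearizable if and only if C(P_1,c,Q) + C(P_2,c,Q) ≤ C(P_3,c,Q) + C(P_4,c,Q). -/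
/-!
The only `s`-`t` paths of `K_4^*` are `P₁,…,P₄`, and for any arc costs `c'` the two long
paths together use the arcs of the two short ones plus `(2,3)` and `(3,2)`; with `c' ≥ 0`
this gives necessity. Conversely, writing `A, B, C, D` for the costs of `P₁,…,P₄` and
`S = C + D`, split `A` over the arcs of `P₁` and `B` over those of `P₂` in the ratio `C : D`
(the `C`-part on the arcs `P₃` shares with them) and put the slack `S - A - B ≥ 0`, again in
the ratio `C : D`, on `(2,3)` and `(3,2)`.
-/

theorem isPath_iff {V : Type*} (A : V → V → Prop) (s t : V) (P : List V) :
    IsPath A s t P ↔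
      2 ≤ P.length ∧ P.head? = some s ∧ P.getLast? = some t ∧ P.Nodup ∧ P.IsChain A :=
  Iff.rfl

theorem isPath_knArc_four_iff {P : List ℕ} :
    IsPath (knArc 4) 1 4 P ↔
      P = [1, 2, 4] ∨ P = [1, 3, 4] ∨ P = [1, 2, 3, 4] ∨ P = [1, 3, 2, 4] := by
  rw [isPath_iff]
  constructor
  · intro hP
    rcases P with _ | ⟨a, _ | ⟨b, _ | ⟨c, _ | ⟨d, _ | ⟨e, l⟩⟩⟩⟩⟩ <;>
      simp_all [knArc, List.isChain_cons_cons] <;> omega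
  · rintro (rfl | rfl | rfl | rfl) <;> simp [knArc, List.isChain_cons_cons]

section linCost

variable {V : Type*} (c : V × V → ℝ)

@[simp] theorem linCost_singleton (a : V) : linCost c [a] = 0 := by
  simp [linCost, arcsOf]

@[simp] theorem linCost_cons_cons (a b : V) (l : List V) :
    linCost c (a :: b :: l) = c (a, b) + linCost c (b :: l) := by
  simp [linCost, arcsOf]

theorem linCost_nonneg (hc : ∀ e, 0 ≤ c e) (P : List V) : 0 ≤ linCost c P :=
  List.sum_nonneg fun _ hx => by
    obtain ⟨e, -, rfl⟩ := List.mem_map.1 hx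
    exact hc e

end linCost

-- The quadratic part of `cost c Q P` is definitionally `linCost (fun e => linCost (Q e) P) P`.
theorem cost_nonneg {V : Type*} {c : V × V → ℝ} {Q : V × V → V × V → ℝ} (hc : ∀ e, 0 ≤ c e)
    (hQ : ∀ e f, 0 ≤ Q e f) (P : List V) : 0 ≤ cost c Q P :=
  add_nonneg (linCost_nonneg _ (fun e => linCost_nonneg _ (hQ e) P) P) (linCost_nonneg c hc P)

theorem linCost_long_add_long_eq (c : ℕ × ℕ → ℝ) :
    linCost c [1, 2, 3, 4] + linCost c [1, 3, 2, 4] =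
      linCost c [1, 2, 4] + linCost c [1, 3, 4] + c (2, 3) + c (3, 2) := by
  simp only [linCost_cons_cons, linCost_singleton]
  ring

theorem exists_nonneg_linCost_eq_of_add_le {A B C D : ℝ} (hA : 0 ≤ A) (hB : 0 ≤ B) (hC : 0 ≤ C)
    (hD : 0 ≤ D) (h : A + B ≤ C + D) :
    ∃ c : ℕ × ℕ → ℝ, (∀ e, 0 ≤ c e) ∧ linCost c [1, 2, 4] = A ∧ linCost c [1, 3, 4] = B ∧
      linCost c [1, 2, 3, 4] = C ∧ linCost c [1, 3, 2, 4] = D := by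
  obtain hCD | hCD := eq_or_lt_of_le (add_nonneg hC hD)
  · refine ⟨0, fun _ => le_rfl, ?_⟩
    simp only [linCost_cons_cons, linCost_singleton, Pi.zero_apply]
    refine ⟨?_, ?_, ?_, ?_⟩ <;> linarith
  set S := C + D
  let c : ℕ × ℕ → ℝ := fun e =>
    if e = (1, 2) then A * C / S else if e = (2, 4) then A * D / S
    else if e = (1, 3) then B * D / S else if e = (3, 4) then B * C / S
    else if e = (2, 3) then C * (S - A - B) / S else if e = (3, 2) then D * (S - A - B) / S
    else 0
  refine ⟨c, fun e => ?_, ?_⟩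
  · have : 0 ≤ S - A - B := by linarith
    dsimp only [c]
    split_ifs <;> positivity
  · simp only [linCost_cons_cons, linCost_singleton, c, ↓reduceIte, Prod.mk.injEq,
      OfNat.ofNat_ne_one, OfNat.one_ne_ofNat, Nat.reduceEqDiff, Nat.succ_ne_self, and_self,
      and_false, and_true, add_zero]
    refine ⟨?_, ?_, ?_, ?_⟩ <;> field_simp <;> ring

theorem stmt_12_general (Q : ℕ × ℕ → ℕ × ℕ → ℝ)
    (hQ0 : ∀ e f, 0 ≤ Q e f) :
    Linearizable (knArc 4) 1 4 (fun _ => 0) Q ↔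
      cost (fun _ => 0) Q [1, 2, 4] + cost (fun _ => 0) Q [1, 3, 4] ≤
      cost (fun _ => 0) Q [1, 2, 3, 4] + cost (fun _ => 0) Q [1, 3, 2, 4] := by
  simp only [Linearizable, isPath_knArc_four_iff, forall_eq_or_imp, forall_eq]
  constructor
  · rintro ⟨c, hc, h₁, h₂, h₃, h₄⟩
    rw [h₁, h₂, h₃, h₄, linCost_long_add_long_eq]
    linarith [hc (2, 3), hc (3, 2)]
  · intro h
    have hcost := cost_nonneg (fun _ => le_rfl) hQ0
    obtain ⟨c, hc, h₁, h₂, h₃, h₄⟩ :=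
      exists_nonneg_linCost_eq_of_add_le (hcost _) (hcost _) (hcost _) (hcost _) h
    exact ⟨c, hc, h₁.symm, h₂.symm, h₃.symm, h₄.symm⟩

/-- On `K_4^*` (vertices `1,2,3,4`, `s = 1`, `t = 4`), the instance is linearizable iff
`C(P₁) + C(P₂) ≤ C(P₃) + C(P₄)`, where `P₁,P₂` are the two paths of length two and
`P₃,P₄` the two paths of length three. -/
theorem stmt_12 (Q : ℕ × ℕ → ℕ × ℕ → ℝ)
    (hQ0 : ∀ e f, 0 ≤ Q e f) (hQs : ∀ e f, Q e f = Q f e) (hQd : ∀ e, Q e e = 0)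
    (hQpath : ∀ e f,
      (¬ ∃ P, IsPath (knArc 4) 1 4 P ∧ e ∈ arcsOf P ∧ f ∈ arcsOf P) → Q e f = 0) :
    Linearizable (knArc 4) 1 4 (fun _ => 0) Q ↔
      cost (fun _ => 0) Q [1, 2, 4] + cost (fun _ => 0) Q [1, 3, 4] ≤
      cost (fun _ => 0) Q [1, 2, 3, 4] + cost (fun _ => 0) Q [1, 3, 2, 4] :=
  stmt_12_general Q hQ0
end
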